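/- Let K be a field with char(K) ≠ 2, E/K an elliptic curve with Weierstrass coordinate functions x, y, and P ∈ E(K) a non-torsion point. If E'/K is an elliptic curve and φ: E' → E is an isogeny defined over K with φ(R) = P, then K(x(R), y(R)) = K(x(R)). -/

import Mathlib

/-! If `y ∉ K(x)`, then `y` is quadratic over `K(x)` with conjugate `-y - a₁x - a₃`, the
`y`-coordinate of `-R`. A `K(x)`-embedding `σ` of `K(x)(y)` with `σ y = -y - a₁x - a₃` fixes `x`,
so it sends `R` to `-R`. As `φ` commutes with `σ` and `P` is `K`-rational,
`P = φ(σR) = φ(-R) = -P`, so `P` would be `2`-torsion. -/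

open WeierstrassCurve WeierstrassCurve.Affine Polynomial

universe u

open Classical in
/-- A model of an isogeny defined over `K` between elliptic curves given by Weierstrass
models `E` and `E'` over `K`, of degree `d`: a compatible family of group homomorphisms on
points over every field extension of `K`, whose kernel over any algebraically closed
extension of `K` is finite of cardinality `d`. -/
structure KIsogeny (K : Type u) [Field K] (E E' : WeierstrassCurve K) (d : ℕ) where
  hom : ∀ (L : Type u) [Field L] [Algebra K L], (E.baseChange L).toAffine.Point →+ (E'.baseChange L).toAffine.Point
  compat : ∀ (L : Type u) [Field L] [Algebra K L] (M : Type u) [Field M] [Algebra K M]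
    (f : L →ₐ[K] M) (P : (E.baseChange L).toAffine.Point),
      hom M (Point.map (W' := E) f P) = Point.map (W' := E') f (hom L P)
  card_ker : ∀ (L : Type u) [Field L] [Algebra K L] [IsAlgClosed L],
      Nat.card (AddMonoidHom.ker (hom L)) = d

open IntermediateField

theorem IntermediateField.exists_algHom_adjoin_simple_gen_eq_of_add_mem_of_mul_mem
    {F L : Type*} [Field F] [Field L] [Algebra F L] {y y' : L} (hy : y ∉ (algebraMap F L).range)
    (hadd : y + y' ∈ (algebraMap F L).range) (hmul : y * y' ∈ (algebraMap F L).range) :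
    ∃ σ : F⟮y⟯ →ₐ[F] L, σ (AdjoinSimple.gen F y) = y' := by
  obtain ⟨s, hs⟩ := hadd
  obtain ⟨p, hp⟩ := hmul
  set q : F[X] := X ^ 2 - C s * X + C p
  have hq_monic : q.Monic := by unfold q; monicity!
  have hq_natDegree : q.natDegree = 2 := by unfold q; compute_degree!
  have hq_aeval (z : L) (hz : z = y ∨ z = y') : aeval z q = 0 := by
    simp only [q, map_add, map_sub, map_mul, map_pow, aeval_X, aeval_C, hs, hp]
    rcases hz with rfl | rfl <;> ring
  have hint : IsIntegral F y := ⟨q, hq_monic, hq_aeval y (.inl rfl)⟩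
  have hminpoly : minpoly F y = q :=
    (eq_of_monic_of_dvd_of_natDegree_le (minpoly.monic hint) hq_monic
      (minpoly.dvd F y (hq_aeval y (.inl rfl)))
      (hq_natDegree ▸ (minpoly.two_le_natDegree_iff hint).mpr hy)).symm
  refine ⟨(algHomAdjoinIntegralEquiv F hint).symm ⟨y', ?_⟩,
    algHomAdjoinIntegralEquiv_symm_apply_gen F hint _⟩
  rw [mem_aroots, hminpoly]
  exact ⟨hq_monic.ne_zero, hq_aeval y' (.inr rfl)⟩

section negY

variable {K L : Type*} [CommRing K] [CommRing L] [Algebra K L] (W : WeierstrassCurve K)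
  (S : Subalgebra K L) {x : L}

lemma WeierstrassCurve.add_negY_mem (hx : x ∈ S) (y : L) :
    y + (W.baseChange L).toAffine.negY x y ∈ S := by
  have hsum : y + (W.baseChange L).toAffine.negY x y
      = -(algebraMap K L W.a₁ * x + algebraMap K L W.a₃) := by
    simp only [negY, baseChange, map_a₁, map_a₃]; ring
  rw [hsum]
  exact S.neg_mem (S.add_mem (S.mul_mem (S.algebraMap_mem _) hx) (S.algebraMap_mem _))

lemma WeierstrassCurve.mul_negY_mem (hx : x ∈ S) {y : L}
    (h : (W.baseChange L).toAffine.Equation x y) : y * (W.baseChange L).toAffine.negY x y ∈ S := by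
  have hprod : y * (W.baseChange L).toAffine.negY x y = -(x ^ 3 + algebraMap K L W.a₂ * x ^ 2
      + algebraMap K L W.a₄ * x + algebraMap K L W.a₆) := by
    rw [equation_iff] at h
    simp only [negY, baseChange, map_a₁, map_a₂, map_a₃, map_a₄, map_a₆] at h ⊢
    linear_combination -h
  rw [hprod]
  refine S.neg_mem (S.add_mem (S.add_mem (S.add_mem (S.pow_mem hx 3) ?_) ?_) (S.algebraMap_mem _))
  · exact S.mul_mem (S.algebraMap_mem _) (S.pow_mem hx 2)
  · exact S.mul_mem (S.algebraMap_mem _) hx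

end negY

namespace KIsogeny

open Classical

variable {K : Type u} [Field K] {E E' : WeierstrassCurve K} {d : ℕ} (φ : KIsogeny K E E' d)
  {M L : Type u} [Field M] [Algebra K M] [Field L] [Algebra K L]
  {Q : (E.baseChange M).toAffine.Point} {P : (E'.baseChange K).toAffine.Point}

theorem hom_eq_baseChange_of_hom_map_eq (f : M →ₐ[K] L)
    (h : φ.hom L (Point.map (W' := E) f Q) = Point.baseChange (W' := E') K L P) :
    φ.hom M Q = Point.baseChange (W' := E') K M P := by
  apply Point.map_injective (W' := E') f
  rw [← φ.compat, h, Point.map_baseChange]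

theorem two_nsmul_eq_zero_of_map_eq_neg (f g : M →ₐ[K] L)
    (h : φ.hom L (Point.map (W' := E) f Q) = Point.baseChange (W' := E') K L P)
    (hneg : Point.map (W' := E) g Q = -Point.map (W' := E) f Q) :
    2 • P = 0 := by
  have hQ := φ.hom_eq_baseChange_of_hom_map_eq f h
  have hP : -Point.baseChange (W' := E') K L P = Point.baseChange (W' := E') K L P :=
    calc -Point.baseChange (W' := E') K L P = φ.hom L (-Point.map (W' := E) f Q) := by
          rw [map_neg, h]
      _ = φ.hom L (Point.map (W' := E) g Q) := by rw [hneg]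
      _ = Point.baseChange (W' := E') K L P := by rw [φ.compat, hQ, Point.map_baseChange]
  apply Point.map_injective (W' := E') (Algebra.ofId K L)
  rw [map_nsmul, map_zero, two_nsmul, ← neg_eq_iff_add_eq_zero]
  exact hP

end KIsogeny

open Classical in
theorem stmt0_general (K : Type u) [Field K]
    (E E' : WeierstrassCurve K)
    (P : (E.baseChange K).toAffine.Point) (hP : ∀ n : ℕ, n ≠ 0 → n • P ≠ 0)
    (d : ℕ) (φ : KIsogeny K E' E d)
    (L : Type u) [Field L] [Algebra K L]
    (x y : L) (h : (E'.baseChange L).toAffine.Nonsingular x y)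
    (hφ : φ.hom L (Point.some _ _ h) = Point.baseChange (W' := E) K L P) :
    IntermediateField.adjoin K {x, y} = IntermediateField.adjoin K {x} := by
  set F := adjoin K {x}
  have hxF : x ∈ F := mem_adjoin_simple_self K x
  suffices hyF : y ∈ F from le_antisymm
    (adjoin_le_iff.mpr (Set.insert_subset hxF (Set.singleton_subset_iff.mpr hyF)))
    (adjoin.mono _ _ _ (Set.singleton_subset_iff.mpr (Set.mem_insert x {y})))
  by_contra hyF
  obtain ⟨σ, hσ⟩ := exists_algHom_adjoin_simple_gen_eq_of_add_mem_of_mul_mem (F := F)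
    (y' := (E'.baseChange L).toAffine.negY x y) (by rintro ⟨z, rfl⟩; exact hyF z.2)
    ⟨⟨_, E'.add_negY_mem F.toSubalgebra hxF y⟩, rfl⟩
    ⟨⟨_, E'.mul_negY_mem F.toSubalgebra hxF h.1⟩, rfl⟩
  let ι : F⟮y⟯ →ₐ[K] L := (val F⟮y⟯).restrictScalars K
  let xM : F⟮y⟯ := algebraMap F F⟮y⟯ ⟨x, hxF⟩
  let yM : F⟮y⟯ := AdjoinSimple.gen F y
  have hM : (E'.baseChange F⟮y⟯).toAffine.Nonsingular xM yM :=
    (baseChange_nonsingular (W := E'.toAffine) ι.injective ..).mp h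
  have hσR : Point.map (W' := E') (σ.restrictScalars K) (.some _ _ hM) = -.some _ _ h := by
    rw [Point.map_some, Point.neg_some, Point.some.injEq]
    exact ⟨σ.commutes _, hσ⟩
  exact hP 2 two_ne_zero (φ.two_nsmul_eq_zero_of_map_eq_neg ι (σ.restrictScalars K) hφ hσR)

open Classical in
/-- Lemma 2.1: if `φ : E' → E` is a `K`-rational isogeny and `φ(R) = P` with `P ∈ E(K)`
non-torsion, then `K(x(R), y(R)) = K(x(R))`. -/
theorem stmt0 (K : Type u) [Field K] (hchar : ringChar K ≠ 2)
    (E E' : WeierstrassCurve K) [E.IsElliptic] [E'.IsElliptic]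
    (P : (E.baseChange K).toAffine.Point) (hP : ∀ n : ℕ, n ≠ 0 → n • P ≠ 0)
    (d : ℕ) (hd : 0 < d) (φ : KIsogeny K E' E d)
    (L : Type u) [Field L] [Algebra K L]
    (x y : L) (h : (E'.baseChange L).toAffine.Nonsingular x y)
    (hφ : φ.hom L (Point.some _ _ h) = Point.baseChange (W' := E) K L P) :
    IntermediateField.adjoin K {x, y} = IntermediateField.adjoin K {x} :=
  stmt0_general K E E' P hP d φ L x y h hφ
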